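/- Evaluation is invariant under standardization for the head-insertion encoding: for every nonempty word a of distinct positive integers, ε(h(a)) = ε(h(std(a))). -/

import Mathlib

/-- Indexed terms of the language `L^I`: generators `2^k` and partial compositions. -/
inductive Trm : Type
  | gen : ℕ → Trm
  | comp : Trm → ℕ → Trm → Trm
deriving DecidableEq

namespace Trm

/-- Arity `|A|`. -/
def arity : Trm → ℕ
  | gen _ => 2
  | comp A _ B => A.arity + B.arity - 1

/-- Set of indices occurring in a term. -/
def ind : Trm → Finset ℕ
  | gen k => {k}
  | comp A _ B => A.ind ∪ B.ind

/-- Root index. -/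
def root : Trm → ℕ
  | gen k => k
  | comp A _ _ => A.root

/-- Number of occurrences of the generator. -/
def countGen : Trm → ℕ
  | gen _ => 1
  | comp A _ B => A.countGen + B.countGen

end Trm

/-- The congruence `=_I` generated by (assoc1) and (assoc2). -/
inductive IEq : Trm → Trm → Prop
  | refl (A : Trm) : IEq A A
  | symm {A B} : IEq A B → IEq B A
  | trans {A B C} : IEq A B → IEq B C → IEq A C
  | congr {A A' B B'} (n : ℕ) : IEq A A' → IEq B B' →
      IEq (Trm.comp A n B) (Trm.comp A' n B')
  | assoc1 (A B C : Trm) (n m : ℕ) : n ≤ m → m < n + B.arity →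
      IEq (Trm.comp (Trm.comp A n B) m C) (Trm.comp A n (Trm.comp B (m - n + 1) C))
  | assoc2 (A B C : Trm) (n m : ℕ) : n + B.arity ≤ m →
      IEq (Trm.comp (Trm.comp A n B) m C) (Trm.comp (Trm.comp A (m - B.arity + 1) C) n B)

/-- Planar binary trees. -/
inductive BT : Type
  | leaf : BT
  | node : BT → BT → BT
deriving DecidableEq

namespace BT

/-- Number of leaves. -/
def leaves : BT → ℕ
  | leaf => 1
  | node l r => l.leaves + r.leaves

/-- Graft `S` at the `i`-th leaf (1-indexed) of a tree. -/
def graft : BT → ℕ → BT → BT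
  | leaf, _, S => S
  | node l r, i, S =>
    if i ≤ l.leaves then node (l.graft i S) r else node l (r.graft (i - l.leaves) S)

end BT

/-- Evaluation `ε` of indexed terms to planar binary trees. -/
def Trm.eval : Trm → BT
  | Trm.gen _ => BT.node BT.leaf BT.leaf
  | Trm.comp A i B => A.eval.graft i B.eval

/-- `l`-factors. -/
inductive LFactor : Trm → Prop
  | gen (k : ℕ) : LFactor (Trm.gen k)
  | step {A : Trm} (j : ℕ) : LFactor A → j ∉ A.ind →
      LFactor (Trm.comp A ((A.ind.filter (· < j)).card + 1) (Trm.gen j))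

/-- Auxiliary for the head-insertion encoding: `done` is the list of already
inserted letters. -/
def hAux : Trm → List ℕ → List ℕ → Trm
  | A, _, [] => A
  | A, done, y :: rest =>
      hAux (Trm.comp A ((done.filter (· < y)).length + 1) (Trm.gen y)) (done ++ [y]) rest

/-- Head-insertion encoding `h` (junk value on the empty word). -/
def hWord : List ℕ → Trm
  | [] => Trm.gen 0
  | x :: rest => hAux (Trm.gen x) [x] rest

/-- `u_a(x)`: number of letters to the left of `x` in `a` that are greater than `x`. -/
def uCount (a : List ℕ) (x : ℕ) : ℕ := ((a.takeWhile (· ≠ x)).filter (x < ·)).length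

/-- Decreasing rearrangement of a word. -/
def sortDesc (a : List ℕ) : List ℕ := (a.mergeSort (· ≤ ·)).reverse

/-- Decreasing encoding `f` (junk value on the empty word). -/
def fWord (a : List ℕ) : Trm :=
  match sortDesc a with
  | [] => Trm.gen 0
  | k :: rest => rest.foldl (fun A x => Trm.comp A (uCount a x + 1) (Trm.gen x)) (Trm.gen k)

/-- Standardization of a word of distinct integers. -/
def std (a : List ℕ) : List ℕ := a.map (fun x => (a.filter (· ≤ x)).length)

/-- Tonks' vertex map, splitting form `φ`. -/
def tonksPhi (a : List ℕ) : BT :=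
  match ha : a.getLast? with
  | none => BT.leaf
  | some x =>
      BT.node (tonksPhi (std (a.filter (· < x)))) (tonksPhi (std (a.filter (x < ·))))
termination_by a.length
decreasing_by
  · have hx : x ∈ a := List.mem_of_mem_getLast? (Option.mem_def.mpr ha)
    have : (a.filter (· < x)).length < a.length := by
      apply List.length_filter_lt_length_iff_exists.2
      exact ⟨x, hx, by simp⟩
    simp only [std, List.length_map, List.length_unattach]
    rw [← List.length_attach (l := a)]
    apply List.length_filter_lt_length_iff_exists.2
    exact ⟨⟨x, hx⟩, List.mem_attach _ _, by simp⟩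
  · have hx : x ∈ a := List.mem_of_mem_getLast? (Option.mem_def.mpr ha)
    have : (a.filter (x < ·)).length < a.length := by
      apply List.length_filter_lt_length_iff_exists.2
      exact ⟨x, hx, by simp⟩
    simp only [std, List.length_map, List.length_unattach]
    rw [← List.length_attach (l := a)]
    apply List.length_filter_lt_length_iff_exists.2
    exact ⟨⟨x, hx⟩, List.mem_attach _ _, by simp⟩

/-- Tonks' vertex map, head-grafting form `φ̂`. -/
def phiHat : List ℕ → BT
  | [] => BT.leaf
  | x :: rest => (phiHat (std rest)).graft x (BT.node BT.leaf BT.leaf)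
termination_by a => a.length
decreasing_by
  simp [std]

/-- The Loday–Ronco map `ψ`. -/
def lodayPsi (a : List ℕ) : BT :=
  match hm : a.maximum with
  | none => BT.leaf
  | some m =>
      let i := a.idxOf m
      BT.node (lodayPsi (std (a.take i))) (lodayPsi (std (a.drop (i + 1))))
termination_by a.length
decreasing_by
  · have hmem : m ∈ a := List.maximum_mem hm
    have hi : a.idxOf m < a.length := List.idxOf_lt_length_iff.2 hmem
    simp only [std, List.length_map, List.length_take]
    omega
  · have : a ≠ [] := by rintro rfl; simp [List.maximum] at hm
    have : 0 < a.length := List.length_pos_iff.2 this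
    simp only [std, List.length_map, List.length_drop]
    omega

/-- Inverse of a permutation word on `{1,…,n}`. -/
def invWord (π : List ℕ) : List ℕ :=
  (List.range π.length).map (fun j => π.idxOf (j + 1) + 1)

/-- One Tamari (right rotation) step, at any subtree. -/
inductive TamariStep : BT → BT → Prop
  | rot (X Y Z : BT) : TamariStep (BT.node (BT.node X Y) Z) (BT.node X (BT.node Y Z))
  | left {l l'} (r : BT) : TamariStep l l' → TamariStep (BT.node l r) (BT.node l' r)
  | right (l : BT) {r r'} : TamariStep r r' → TamariStep (BT.node l r) (BT.node l r')

/-- The Tamari order. -/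
def TamariLE : BT → BT → Prop := Relation.ReflTransGen TamariStep

/-- The strict Tamari order. -/
def TamariLT : BT → BT → Prop := Relation.TransGen TamariStep

/-- One cover of the right weak Bruhat order on words. -/
inductive BruhatStep : List ℕ → List ℕ → Prop
  | swap (α : List ℕ) {u v : ℕ} (β : List ℕ) : u < v →
      BruhatStep (α ++ u :: v :: β) (α ++ v :: u :: β)

/-- The right weak Bruhat order on words. -/
def BruhatLE : List ℕ → List ℕ → Prop := Relation.ReflTransGen BruhatStep

/-- Head-insertion index `k(a; σ)`. -/
def kIdx (a : ℕ) (σ : List ℕ) : ℕ := 1 + (σ.filter (· < a)).length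

/-! The insertion indices of `h` only count already inserted letters smaller than the new one,
and the rank map `x ↦ #{y ∈ a | y ≤ x}` behind `std` is strictly increasing on the letters of `a`,
so it preserves every insertion index. -/

lemma length_filter_le_lt_of_lt {α : Type*} [LinearOrder α] {l : List α} {u v : α}
    (hv : v ∈ l) (huv : u < v) : (l.filter (· ≤ u)).length < (l.filter (· ≤ v)).length := by
  have hsub : (l.filter (· ≤ u)).Sublist (l.filter (· ≤ v)) :=
    List.monotone_filter_right l fun x hx => by
      simp only [decide_eq_true_eq] at hx ⊢
      exact hx.trans huv.le
  refine lt_of_le_of_ne hsub.length_le fun hlen => ?_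
  have hmem : v ∈ l.filter (· ≤ v) := by simp [hv]
  rw [← hsub.eq_of_length hlen] at hmem
  simp only [List.mem_filter, decide_eq_true_eq] at hmem
  exact hmem.2.not_gt huv

lemma strictMonoOn_length_filter_le {α : Type*} [LinearOrder α] (l : List α) :
    StrictMonoOn (fun x => (l.filter (· ≤ x)).length) {x | x ∈ l} :=
  fun _ _ _ hv huv => length_filter_le_lt_of_lt hv huv

lemma length_filter_map_lt {α β : Type*} [LinearOrder α] [LinearOrder β] {g : α → β}
    {s : Set α} (hg : StrictMonoOn g s) {l : List α} (hl : ∀ x ∈ l, x ∈ s) {y : α}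
    (hy : y ∈ s) : ((l.map g).filter (· < g y)).length = (l.filter (· < y)).length := by
  rw [List.filter_map, List.length_map]
  congr 1
  refine List.filter_congr fun x hx => ?_
  simp only [Function.comp_apply, hg.lt_iff_lt (hl x hx) hy]

lemma eval_hAux_map {g : ℕ → ℕ} {s : Set ℕ} (hg : StrictMonoOn g s) {A A' : Trm}
    (hA : A.eval = A'.eval) {done rest : List ℕ} (hs : ∀ x ∈ done ++ rest, x ∈ s) :
    (hAux A' (done.map g) (rest.map g)).eval = (hAux A done rest).eval := by
  induction rest generalizing A A' done with
  | nil => simpa [hAux] using hA.symm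
  | cons y rest ih =>
    have hy : y ∈ s := hs y (by simp)
    have hdone : ∀ x ∈ done, x ∈ s := fun x hx => hs x (by simp [hx])
    simp only [List.map_cons, hAux, length_filter_map_lt hg hdone hy]
    rw [show done.map g ++ [g y] = (done ++ [y]).map g by simp]
    refine ih (by simp [Trm.eval, hA]) fun x hx => hs x ?_
    simp only [List.mem_append, List.mem_cons] at hx ⊢
    tauto

lemma eval_hWord_map {g : ℕ → ℕ} {a : List ℕ} (hg : StrictMonoOn g {x | x ∈ a}) :
    (hWord (a.map g)).eval = (hWord a).eval := by
  cases a with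
  | nil => rfl
  | cons x rest =>
    simp only [List.map_cons, hWord]
    exact eval_hAux_map hg (A := .gen x) (A' := .gen (g x)) (done := [x]) rfl
      fun z hz => by simpa using hz

theorem eval_h_std_general (a : List ℕ) :
    (hWord a).eval = (hWord (std a)).eval :=
  (eval_hWord_map (strictMonoOn_length_filter_le a)).symm

theorem eval_h_std (a : List ℕ) (ha : a ≠ []) (hnd : a.Nodup) (hpos : ∀ x ∈ a, 0 < x) :
    (hWord a).eval = (hWord (std a)).eval :=
  eval_h_std_general a
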